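/- Let G be the graph obtained from the 3-cycle C_3 on vertices x_1, x_2, x_3 by adding, to each vertex x_i, the k edges x_i y_{i,1}, ..., x_i y_{i,k} to new vertices (k ≥ 1). Define q_0 = x_1 x_2, q_1 = x_1 x_3 + x_2 x_3, and q_{j+1} = x_1 y_{1,j} + x_2 y_{2,j} + x_3 y_{3,j} for j = 1,...,k. Then the edge ideal I(G) in K[x_1,x_2,x_3, y_{1,1},...,y_{3,k}] equals the radical of the ideal (q_0, q_1, ..., q_{k+1}); in particular ara I(G) ≤ 2 + k. -/

import Mathlib

/-!
Each `q_j` is a sum of edge monomials, so `(q) ⊆ I(G)`. Conversely the edges enter `√(q)` one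
after another via `a² = a (a + b) - a b`: first `x₁x₃` and `x₂x₃` from `q₁ = x₁x₃ + x₂x₃`, whose
cross term is a multiple of `q₀`, then `x_i y_{i,j}` from `q_{j+1}`, whose cross terms are
multiples of triangle edges. Finally `I(G)` is radical: a polynomial in `√I(G)` lies in every
prime `(X_v : v ∈ T)` with `T` a vertex cover, and a monomial divisible by no edge avoids the
cover formed by the variables it does not involve.
-/

open MvPolynomial

/-- The *arithmetical rank* of an ideal `I`: the least number `s` of elements
`a_1, …, a_s` of `R` generating an ideal with the same radical as `I`. -/
noncomputable def araRank {R : Type*} [CommRing R] (I : Ideal R) : ℕ :=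
  sInf {s : ℕ | ∃ a : Fin s → R, (Ideal.span (Set.range a)).radical = I.radical}

/-- The *big height* of an ideal `I`: the maximum of the heights of the
minimal primes of `I`. -/
noncomputable def bigHeight {R : Type*} [CommRing R] (I : Ideal R) : ℕ∞ :=
  sSup {h : ℕ∞ | ∃ P ∈ I.minimalPrimes, ∃ hP : P.IsPrime,
    Order.height (⟨P, hP⟩ : PrimeSpectrum R) = h}

/-- The *height* of an ideal `I`: the minimum of the heights of the
minimal primes of `I`. -/
noncomputable def idealHeight {R : Type*} [CommRing R] (I : Ideal R) : ℕ∞ :=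
  sInf {h : ℕ∞ | ∃ P ∈ I.minimalPrimes, ∃ hP : P.IsPrime,
    Order.height (⟨P, hP⟩ : PrimeSpectrum R) = h}

namespace Ideal

variable {R : Type*} [CommRing R] {I : Ideal R}

theorem mem_radical_of_add_mem_of_mul_mem {a b : R} (hab : a + b ∈ I.radical)
    (hmul : a * b ∈ I.radical) : a ∈ I.radical := by
  rw [← radical_idem]
  refine ⟨2, ?_⟩
  rw [show a ^ 2 = a * (a + b) - a * b by ring]
  exact sub_mem (mul_mem_left _ _ hab) hmul

theorem mem_radical_of_sum_mem {ι : Type*} {s : Finset ι} {f : ι → R}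
    (hsum : ∑ j ∈ s, f j ∈ I.radical)
    (hmul : ∀ i ∈ s, ∀ j ∈ s, i ≠ j → f i * f j ∈ I.radical) {i : ι} (hi : i ∈ s) :
    f i ∈ I.radical := by
  classical
  rw [← Finset.add_sum_erase s f hi] at hsum
  refine mem_radical_of_add_mem_of_mul_mem hsum ?_
  rw [Finset.mul_sum]
  exact sum_mem _ fun j hj =>
    hmul i hi j (Finset.mem_of_mem_erase hj) (Finset.ne_of_mem_erase hj).symm

end Ideal

namespace MvPolynomial

variable {σ R : Type*}

theorem monomial_mem_of_X_mul_X_mem [CommSemiring R] {I : Ideal (MvPolynomial σ R)} {u w : σ}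
    (huw : u ≠ w) (h : X u * X w ∈ I) {m : σ →₀ ℕ} (hu : m u ≠ 0) (hw : m w ≠ 0)
    (c : R) : monomial m c ∈ I := by
  classical
  refine Ideal.mem_of_dvd _ ?_ h
  rw [X, X, monomial_mul, one_mul, monomial_dvd_monomial]
  refine ⟨Or.inr fun v => ?_, one_dvd c⟩
  simp only [Finsupp.add_apply, Finsupp.single_apply]
  split_ifs with hvu hvw <;> subst_vars <;> first | exact absurd rfl huw | omega

theorem sub_aeval_mem [CommRing R] {L : Ideal (MvPolynomial σ R)} {g : σ → MvPolynomial σ R}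
    (hg : ∀ v, X v - g v ∈ L) (p : MvPolynomial σ R) : p - aeval g p ∈ L := by
  induction p using MvPolynomial.induction_on with
  | C a => simp
  | add p q hp hq => simpa [add_sub_add_comm] using add_mem hp hq
  | mul_X p v hp =>
    rw [map_mul, aeval_X, show p * X v - aeval g p * g v =
      (p - aeval g p) * X v + aeval g p * (X v - g v) by ring]
    exact add_mem (L.mul_mem_right _ hp) (L.mul_mem_left _ (hg v))

open Classical in
theorem ker_aeval_eq_span_X_image [CommRing R] (s : Set σ) :
    RingHom.ker (aeval (fun v => if v ∈ s then 0 else X v) :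
      MvPolynomial σ R →ₐ[R] MvPolynomial σ R) = Ideal.span (X '' s) := by
  refine le_antisymm (fun p hp => ?_) (Ideal.span_le.2 ?_)
  · have hg : ∀ v, X v - (if v ∈ s then 0 else X v) ∈
        Ideal.span (X '' s : Set (MvPolynomial σ R)) := by
      intro v
      split_ifs with hv
      · simpa using Ideal.subset_span (Set.mem_image_of_mem X hv)
      · simp
    simpa only [RingHom.mem_ker.1 hp, sub_zero] using sub_aeval_mem hg p
  · rintro _ ⟨v, hv, rfl⟩
    simp [hv]

theorem isPrime_span_X_image [CommRing R] [IsDomain R] (s : Set σ) :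
    (Ideal.span (X '' s : Set (MvPolynomial σ R))).IsPrime := by
  classical
  rw [← ker_aeval_eq_span_X_image]
  exact RingHom.ker_isPrime _

theorem isRadical_span_of_forall_eq_X_mul_X [CommRing R] [IsDomain R]
    {S : Set (MvPolynomial σ R)} (hS : ∀ p ∈ S, ∃ u w, u ≠ w ∧ p = X u * X w) :
    (Ideal.span S).IsRadical := by
  intro f hf
  rw [f.as_sum]
  refine Ideal.sum_mem _ fun m hm => ?_
  obtain ⟨u, w, huw, huwS, hu, hw⟩ :
      ∃ u w, u ≠ w ∧ X u * X w ∈ S ∧ m u ≠ 0 ∧ m w ≠ 0 := by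
    by_contra! hno
    have hcover : Ideal.span S ≤ Ideal.span (X '' {v | m v = 0}) := by
      refine Ideal.span_le.2 fun p hp => ?_
      obtain ⟨u, w, huw, rfl⟩ := hS p hp
      by_cases hu : m u = 0
      · exact Ideal.mul_mem_right _ _ (Ideal.subset_span ⟨u, hu, rfl⟩)
      · exact Ideal.mul_mem_left _ _ (Ideal.subset_span ⟨w, hno u w huw hp hu, rfl⟩)
    obtain ⟨v, hv, hmv⟩ :=
      mem_ideal_span_X_image.1 ((isPrime_span_X_image _).radical_le_iff.2 hcover hf) m hm
    exact hmv hv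
  exact monomial_mem_of_X_mul_X_mem huw (Ideal.subset_span huwS) hu hw _

end MvPolynomial

section TriangleWithWhiskers

variable {R ι : Type*}

def triangleWhiskerEdges [Mul R] (x : Fin 3 → R) (y : Fin 3 → ι → R) : Set R :=
  {x 0 * x 1, x 1 * x 2, x 0 * x 2} ∪ {p | ∃ i l, p = x i * y i l}

theorem span_le_span_triangleWhiskerEdges [CommSemiring R] {k : ℕ} {x : Fin 3 → R}
    {y : Fin 3 → Fin k → R} {q : ℕ → R} (hq0 : q 0 = x 0 * x 1) (hq1 : q 1 = x 0 * x 2 + x 1 * x 2)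
    (hqj : ∀ l : Fin k, q (l.val + 2) = x 0 * y 0 l + x 1 * y 1 l + x 2 * y 2 l) :
    Ideal.span (q '' Set.Iio (k + 2)) ≤ Ideal.span (triangleWhiskerEdges x y) := by
  have edge : ∀ p ∈ triangleWhiskerEdges x y, p ∈ Ideal.span (triangleWhiskerEdges x y) :=
    fun _ hp => Ideal.subset_span hp
  have whisker : ∀ i l, x i * y i l ∈ Ideal.span (triangleWhiskerEdges x y) :=
    fun i l => edge _ (Or.inr ⟨i, l, rfl⟩)
  rw [Ideal.span_le]
  rintro _ ⟨m, hm, rfl⟩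
  rcases m with _ | _ | l
  · rw [hq0]
    exact edge _ (Or.inl (by simp))
  · rw [hq1]
    exact add_mem (edge _ (Or.inl (by simp))) (edge _ (Or.inl (by simp)))
  · rw [hqj ⟨l, by simp only [Set.mem_Iio] at hm; omega⟩]
    exact add_mem (add_mem (whisker 0 _) (whisker 1 _)) (whisker 2 _)

theorem span_triangleWhiskerEdges_le_radical [CommRing R] {k : ℕ} {x : Fin 3 → R}
    {y : Fin 3 → Fin k → R} {q : ℕ → R} (hq0 : q 0 = x 0 * x 1) (hq1 : q 1 = x 0 * x 2 + x 1 * x 2)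
    (hqj : ∀ l : Fin k, q (l.val + 2) = x 0 * y 0 l + x 1 * y 1 l + x 2 * y 2 l) :
    Ideal.span (triangleWhiskerEdges x y) ≤ (Ideal.span (q '' Set.Iio (k + 2))).radical := by
  set J := Ideal.span (q '' Set.Iio (k + 2))
  have hq : ∀ m < k + 2, q m ∈ J.radical :=
    fun m hm => Ideal.le_radical (Ideal.subset_span ⟨m, hm, rfl⟩)
  have h01 : x 0 * x 1 ∈ J.radical := hq0 ▸ hq 0 (by omega)
  have hprod : x 0 * x 2 * (x 1 * x 2) ∈ J.radical := by
    rw [show x 0 * x 2 * (x 1 * x 2) = x 2 * x 2 * (x 0 * x 1) by ring]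
    exact Ideal.mul_mem_left _ _ h01
  have h02 : x 0 * x 2 ∈ J.radical :=
    Ideal.mem_radical_of_add_mem_of_mul_mem (hq1 ▸ hq 1 (by omega)) hprod
  have h12 : x 1 * x 2 ∈ J.radical :=
    Ideal.mem_radical_of_add_mem_of_mul_mem (add_comm (x 0 * x 2) _ ▸ hq1 ▸ hq 1 (by omega))
      (mul_comm (x 0 * x 2) _ ▸ hprod)
  have htri : ∀ a b : Fin 3, a ≠ b → x a * x b ∈ J.radical := by
    intro a b hab
    fin_cases a <;> fin_cases b <;>
      first | exact absurd rfl hab | assumption | (rw [mul_comm]; assumption)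
  rw [Ideal.span_le]
  rintro _ ((rfl | rfl | rfl) | ⟨i, l, rfl⟩)
  · exact h01
  · exact h12
  · exact h02
  · refine Ideal.mem_radical_of_sum_mem (f := fun j => x j * y j l) ?_ ?_ (Finset.mem_univ i)
    · rw [Fin.sum_univ_three, ← hqj l]
      exact hq _ (by omega)
    · intro a _ b _ hab
      rw [mul_mul_mul_comm]
      exact Ideal.mul_mem_right _ _ (htri a b hab)

theorem exists_eq_X_mul_X_of_mem_triangleWhiskerEdges {K : Type*} [CommSemiring K]
    {x : Fin 3 → MvPolynomial (Fin 3 ⊕ Fin 3 × ι) K}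
    {y : Fin 3 → ι → MvPolynomial (Fin 3 ⊕ Fin 3 × ι) K}
    (hx : ∀ i, x i = X (Sum.inl i)) (hy : ∀ i l, y i l = X (Sum.inr (i, l)))
    {p : MvPolynomial (Fin 3 ⊕ Fin 3 × ι) K} (hp : p ∈ triangleWhiskerEdges x y) :
    ∃ u w, u ≠ w ∧ p = X u * X w := by
  rcases hp with (rfl | rfl | rfl) | ⟨i, l, rfl⟩ <;> simp only [hx, hy] <;>
    exact ⟨_, _, by simp, rfl⟩

end TriangleWithWhiskers

theorem triangle_multiwhisker_radical_general {K : Type*} [Field K] (k : ℕ)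
    (x : Fin 3 → MvPolynomial (Fin 3 ⊕ Fin 3 × Fin k) K)
    (y : Fin 3 → Fin k → MvPolynomial (Fin 3 ⊕ Fin 3 × Fin k) K)
    (hx : ∀ i, x i = X (Sum.inl i))
    (hy : ∀ i l, y i l = X (Sum.inr (i, l)))
    (I : Ideal (MvPolynomial (Fin 3 ⊕ Fin 3 × Fin k) K))
    (hI : I = Ideal.span
      ({x 0 * x 1, x 1 * x 2, x 0 * x 2} ∪
       {p | ∃ (i : Fin 3) (l : Fin k), p = x i * y i l}))
    (q : ℕ → MvPolynomial (Fin 3 ⊕ Fin 3 × Fin k) K)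
    (hq0 : q 0 = x 0 * x 1)
    (hq1 : q 1 = x 0 * x 2 + x 1 * x 2)
    (hqj : ∀ l : Fin k, q (l.val + 2) = x 0 * y 0 l + x 1 * y 1 l + x 2 * y 2 l) :
    I = (Ideal.span (q '' Set.Iio (k + 2))).radical ∧ araRank I ≤ 2 + k := by
  replace hI : I = Ideal.span (triangleWhiskerEdges x y) := hI
  subst hI
  have hJI := span_le_span_triangleWhiskerEdges hq0 hq1 hqj
  have hIJ := span_triangleWhiskerEdges_le_radical hq0 hq1 hqj
  have hrad := isRadical_span_of_forall_eq_X_mul_X fun _ =>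
    exists_eq_X_mul_X_of_mem_triangleWhiskerEdges hx hy
  have heq := le_antisymm hIJ ((Ideal.radical_mono hJI).trans hrad)
  refine ⟨heq, Nat.sInf_le ⟨fun n : Fin (2 + k) => q n, ?_⟩⟩
  rw [Set.range_comp' q Fin.val, Fin.range_val, Nat.add_comm 2 k, heq, Ideal.radical_idem]

/-- Let `G` be obtained from the `3`-cycle on `x_1, x_2, x_3` by adding the `k ≥ 1`
whiskers `x_i y_{i,1}, …, x_i y_{i,k}` at each vertex.  With `q_0 = x_1 x_2`,
`q_1 = x_1 x_3 + x_2 x_3` and `q_{j+1} = x_1 y_{1,j} + x_2 y_{2,j} + x_3 y_{3,j}`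
(`j = 1, …, k`), the edge ideal `I(G)` equals the radical of `(q_0, …, q_{k+1})`;
in particular `ara I(G) ≤ 2 + k`.  (Indices are `0`-based: the paper's `x_j` is `x (j-1)`
and `y_{i,j}` is `y (i-1) (j-1)`.) -/
theorem triangle_multiwhisker_radical {K : Type*} [Field K] (k : ℕ) (hk : 1 ≤ k)
    (x : Fin 3 → MvPolynomial (Fin 3 ⊕ Fin 3 × Fin k) K)
    (y : Fin 3 → Fin k → MvPolynomial (Fin 3 ⊕ Fin 3 × Fin k) K)
    (hx : ∀ i, x i = X (Sum.inl i))
    (hy : ∀ i l, y i l = X (Sum.inr (i, l)))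
    (I : Ideal (MvPolynomial (Fin 3 ⊕ Fin 3 × Fin k) K))
    (hI : I = Ideal.span
      ({x 0 * x 1, x 1 * x 2, x 0 * x 2} ∪
       {p | ∃ (i : Fin 3) (l : Fin k), p = x i * y i l}))
    (q : ℕ → MvPolynomial (Fin 3 ⊕ Fin 3 × Fin k) K)
    (hq0 : q 0 = x 0 * x 1)
    (hq1 : q 1 = x 0 * x 2 + x 1 * x 2)
    (hqj : ∀ l : Fin k, q (l.val + 2) = x 0 * y 0 l + x 1 * y 1 l + x 2 * y 2 l) :
    I = (Ideal.span (q '' Set.Iio (k + 2))).radical ∧ araRank I ≤ 2 + k :=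
  triangle_multiwhisker_radical_general k x y hx hy I hI q hq0 hq1 hqj
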